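/- arXiv:2012.05349 — 2 statements merged into one kernel-verified Lean document; each statement's English description precedes it below -/
import Mathlib

section
/- Let X ∈ ℝ^{n_x×n_x} be symmetric positive definite, Y ∈ ℝ^{n_u×n_x}, and for i = 1,…,s let E_{W,i} ∈ ℝ^{n_pi×n_pi} be symmetric positive definite and E^x_{Y,i} ∈ ℝ^{n_qi×n_x}, E^u_{Y,i} ∈ ℝ^{n_qi×n_u} be given. Suppose a_α ≥ 0 and a_{σ,1},…,a_{σ,s} ≥ 0 satisfy: (a) [[−X, A X − B^u Y, B^w],[(A X − B^u Y)ᵀ, −a_α X, 0],[(B^w)ᵀ, 0, −D]] ⪯ 0 with D = diag(a_{σ,1} E_{W,1},…,a_{σ,s} E_{W,s}); (b) for each i, [[−I_{n_qi}, E^x_{Y,i} X − E^u_{Y,i} Y],[(E^x_{Y,i} X − E^u_{Y,i} Y)ᵀ, −X]] ⪯ 0; and (c) a_α + Σ_{i=1}^s a_{σ,i} ≤ 1. Then, with E_R = X^{-1}, K = Y X^{-1}, Ā = A − B^u K, and C̄_i = E^x_{Y,i} − E^u_{Y,i} K, for every σ ≥ 0 the set R(σ) = {x : xᵀ E_R x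 ≤ σ²} satisfies (i) R(σ) ⊆ Y(σ) = {x : xᵀ C̄_iᵀ C̄_i x ≤ σ² for all i} and (ii) Ā·R(σ) + B^w·W(σ) ⊆ R(σ), where W(σ) = {w = (w_1,…,w_s) : w_iᵀ E_{W,i} w_i ≤ σ² for all i}. -/
open Matrix Set Pointwise Filter Topology

noncomputable def vnorm {n : Type*} [Fintype n] (v : n → ℝ) : ℝ :=
  Real.sqrt (∑ i, v i ^ 2)

noncomputable def sNorm {m n : Type*} [Fintype m] [Fintype n] (M : Matrix m n ℝ) : ℝ :=
  sSup ((fun v => vnorm (M.mulVec v)) '' {v | vnorm v ≤ 1})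

/-- `specLe1 M` means the spectral (operator 2-)norm of `M` is at most 1. -/
def specLe1 {m n : Type*} [Fintype m] [Fintype n] (M : Matrix m n ℝ) : Prop :=
  ∀ v, vnorm (M.mulVec v) ≤ vnorm v

/-- Membership in the structured norm-bounded uncertainty set 𝔻:
`Δ = diag(Δ₁,…,Δ_s)` with `‖Δᵢ‖₂ ≤ 1`. -/
def memD {s : ℕ} {np nq : Fin s → ℕ}
    (Δ : Matrix (Σ i, Fin (np i)) (Σ i, Fin (nq i)) ℝ) : Prop :=
  ∃ B : ∀ i, Matrix (Fin (np i)) (Fin (nq i)) ℝ,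
    (∀ i, specLe1 (B i)) ∧ Δ = Matrix.blockDiagonal' B

/-- The `i`-th row block of a block-partitioned matrix. -/
def rowBlock {s : ℕ} {nq : Fin s → ℕ} {n : Type*}
    (M : Matrix (Σ i, Fin (nq i)) n ℝ) (i : Fin s) : Matrix (Fin (nq i)) n ℝ :=
  Matrix.of fun j l => M ⟨i, j⟩ l

/-- The `i`-th block of a block-partitioned vector. -/
def vecBlock {s : ℕ} {np : Fin s → ℕ} (v : (Σ i, Fin (np i)) → ℝ) (i : Fin s) :
    Fin (np i) → ℝ := fun j => v ⟨i, j⟩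

/-! Evaluating the quadratic form of LMI (b) at `(C̄ᵢ x, X⁻¹ x)` gives `‖C̄ᵢ x‖² ≤ xᵀ X⁻¹ x`.
Evaluating that of LMI (a) at `(X⁻¹ z, X⁻¹ x, w)` with `z = Ā x + B^w w` makes the cross terms
collapse to `2 zᵀ X⁻¹ z`, so `zᵀ X⁻¹ z ≤ a_α xᵀ X⁻¹ x + Σᵢ a_{σ,i} wᵢᵀ E_{W,i} wᵢ`, which is at
most `σ²` by (c). -/

namespace Matrix

section Quadratic

variable {R : Type*} [CommRing R] {l m n : Type*} [Fintype m] [Fintype n]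

theorem sumElim_dotProduct_fromBlocks_mulVec_sumElim (P : Matrix m m R) (M : Matrix m n R)
    (Q : Matrix n n R) (a : m → R) (b : n → R) :
    Sum.elim a b ⬝ᵥ fromBlocks P M Mᵀ Q *ᵥ Sum.elim a b
      = a ⬝ᵥ P *ᵥ a + 2 * (a ⬝ᵥ M *ᵥ b) + b ⬝ᵥ Q *ᵥ b := by
  rw [fromBlocks_mulVec, Sum.elim_comp_inl, Sum.elim_comp_inr, sumElim_dotProduct_sumElim,
    dotProduct_add, dotProduct_add, dotProduct_mulVec b, vecMul_transpose,
    dotProduct_comm (M *ᵥ b)]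
  ring

theorem dotProduct_transpose_mul_self_mulVec [Fintype l] (C : Matrix l m R) (x : m → R) :
    x ⬝ᵥ (Cᵀ * C) *ᵥ x = C *ᵥ x ⬝ᵥ C *ᵥ x := by
  rw [← mulVec_mulVec, dotProduct_mulVec, vecMul_transpose]

theorem dotProduct_blockDiagonal'_mulVec {o : Type*} [Fintype o] [DecidableEq o]
    {k : o → Type*} [∀ i, Fintype (k i)] (B : ∀ i, Matrix (k i) (k i) R)
    (w : (Σ i, k i) → R) :
    w ⬝ᵥ blockDiagonal' B *ᵥ w = ∑ i, (fun j => w ⟨i, j⟩) ⬝ᵥ B i *ᵥ fun j => w ⟨i, j⟩ := by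
  simp only [dotProduct, mulVec, ← Finset.univ_sigma_univ, Finset.sum_sigma]
  refine Finset.sum_congr rfl fun i _ => Finset.sum_congr rfl fun j _ => ?_
  rw [Finset.sum_eq_single i]
  · simp
  · intro i' _ hi'
    exact Finset.sum_eq_zero fun j' _ => by rw [blockDiagonal'_apply_ne _ _ _ hi'.symm, zero_mul]
  · simp

theorem nonsing_inv_mulVec_dotProduct_mulVec [DecidableEq m] {X : Matrix m m R}
    (hX : IsUnit X.det) (x : m → R) :
    X⁻¹ *ᵥ x ⬝ᵥ X *ᵥ (X⁻¹ *ᵥ x) = x ⬝ᵥ X⁻¹ *ᵥ x := by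
  rw [mulVec_mulVec, mul_nonsing_inv X hX, one_mulVec, dotProduct_comm]

theorem sub_mul_mul_nonsing_inv [DecidableEq m] {X : Matrix m m R} (hX : IsUnit X.det)
    (E : Matrix l m R) (F : Matrix l n R) (Y : Matrix n m R) :
    E - F * (Y * X⁻¹) = (E * X - F * Y) * X⁻¹ := by
  rw [Matrix.sub_mul, Matrix.mul_assoc E, mul_nonsing_inv X hX, Matrix.mul_one,
    Matrix.mul_assoc]

end Quadratic

theorem PosSemidef.dotProduct_mulVec_nonpos_of_neg {n : Type*} [Fintype n]
    {N : Matrix n n ℝ} (hN : (-N).PosSemidef) (v : n → ℝ) : v ⬝ᵥ N *ᵥ v ≤ 0 := by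
  have := hN.dotProduct_mulVec_nonneg v
  rw [star_trivial, neg_mulVec, dotProduct_neg] at this
  linarith

section LMI

variable {m n p : Type*} [Fintype m] [Fintype n] [Fintype p] [DecidableEq n]
  {X : Matrix n n ℝ}

theorem mul_nonsing_inv_mulVec_dotProduct_self_le [DecidableEq m] (hX : IsUnit X.det)
    {M : Matrix m n ℝ}
    (h : (-fromBlocks (-1) M Mᵀ (-X)).PosSemidef) (x : n → ℝ) :
    (M * X⁻¹) *ᵥ x ⬝ᵥ (M * X⁻¹) *ᵥ x ≤ x ⬝ᵥ X⁻¹ *ᵥ x := by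
  have key := h.dotProduct_mulVec_nonpos_of_neg (Sum.elim (M *ᵥ (X⁻¹ *ᵥ x)) (X⁻¹ *ᵥ x))
  rw [sumElim_dotProduct_fromBlocks_mulVec_sumElim, neg_mulVec, neg_mulVec, one_mulVec,
    dotProduct_neg, dotProduct_neg, nonsing_inv_mulVec_dotProduct_mulVec hX] at key
  rw [← mulVec_mulVec]
  linarith

theorem nonsing_inv_mulVec_dotProduct_le_of_posSemidef (hX : IsUnit X.det)
    {M : Matrix n n ℝ} {Bw : Matrix n p ℝ} {D : Matrix p p ℝ} {α : ℝ}
    (h : (-fromBlocks (fromBlocks (-X) M Mᵀ (-(α • X))) (fromRows Bw 0) (fromCols Bwᵀ 0)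
      (-D)).PosSemidef) (x : n → ℝ) (w : p → ℝ) :
    ((M * X⁻¹) *ᵥ x + Bw *ᵥ w) ⬝ᵥ X⁻¹ *ᵥ ((M * X⁻¹) *ᵥ x + Bw *ᵥ w)
      ≤ α * (x ⬝ᵥ X⁻¹ *ᵥ x) + w ⬝ᵥ D *ᵥ w := by
  set z := (M * X⁻¹) *ᵥ x + Bw *ᵥ w
  have hBw : fromCols Bwᵀ (0 : Matrix p n ℝ) = (fromRows Bw 0)ᵀ := by
    rw [transpose_fromRows, transpose_zero]
  rw [hBw] at h
  have key := h.dotProduct_mulVec_nonpos_of_neg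
    (Sum.elim (Sum.elim (X⁻¹ *ᵥ z) (X⁻¹ *ᵥ x)) w)
  rw [sumElim_dotProduct_fromBlocks_mulVec_sumElim, sumElim_dotProduct_fromBlocks_mulVec_sumElim,
    fromRows_mulVec, zero_mulVec, sumElim_dotProduct_sumElim, dotProduct_zero, add_zero,
    neg_mulVec, neg_mulVec, neg_mulVec, smul_mulVec, dotProduct_neg, dotProduct_neg,
    dotProduct_neg, dotProduct_smul, smul_eq_mul, nonsing_inv_mulVec_dotProduct_mulVec hX,
    nonsing_inv_mulVec_dotProduct_mulVec hX] at key
  have hz : X⁻¹ *ᵥ z ⬝ᵥ M *ᵥ (X⁻¹ *ᵥ x) + X⁻¹ *ᵥ z ⬝ᵥ Bw *ᵥ w = z ⬝ᵥ X⁻¹ *ᵥ z := by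
    rw [mulVec_mulVec, ← dotProduct_add, dotProduct_comm]
  linarith

end LMI

end Matrix

theorem stmt8_general {nx nu s : ℕ} {np nq : Fin s → ℕ}
    (A : Matrix (Fin nx) (Fin nx) ℝ) (Bu : Matrix (Fin nx) (Fin nu) ℝ)
    (Bw : Matrix (Fin nx) (Σ i, Fin (np i)) ℝ)
    (X : Matrix (Fin nx) (Fin nx) ℝ) (hX : X.PosDef)
    (Y : Matrix (Fin nu) (Fin nx) ℝ)
    (E_W : ∀ i, Matrix (Fin (np i)) (Fin (np i)) ℝ)
    (EYx : ∀ i : Fin s, Matrix (Fin (nq i)) (Fin nx) ℝ)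
    (EYu : ∀ i : Fin s, Matrix (Fin (nq i)) (Fin nu) ℝ)
    (aα : ℝ) (aσ : Fin s → ℝ) (haα : 0 ≤ aα) (haσ : ∀ i, 0 ≤ aσ i)
    (ha : (-(Matrix.fromBlocks
        (Matrix.fromBlocks (-X) (A * X - Bu * Y) ((A * X - Bu * Y)ᵀ) (-(aα • X)))
        (Matrix.fromRows Bw 0)
        (Matrix.fromCols Bwᵀ 0)
        (-(Matrix.blockDiagonal' fun i => aσ i • E_W i)))).PosSemidef)
    (hb : ∀ i, (-(Matrix.fromBlocks
        (-(1 : Matrix (Fin (nq i)) (Fin (nq i)) ℝ)) (EYx i * X - EYu i * Y)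
        ((EYx i * X - EYu i * Y)ᵀ) (-X))).PosSemidef)
    (hc : aα + ∑ i, aσ i ≤ 1) :
    ∀ σ : ℝ, 0 ≤ σ →
      ({x | x ⬝ᵥ X⁻¹.mulVec x ≤ σ ^ 2} ⊆
          {x | ∀ i, x ⬝ᵥ ((EYx i - EYu i * (Y * X⁻¹))ᵀ *
              (EYx i - EYu i * (Y * X⁻¹))).mulVec x ≤ σ ^ 2}) ∧
      ((A - Bu * (Y * X⁻¹)).mulVec '' {x | x ⬝ᵥ X⁻¹.mulVec x ≤ σ ^ 2} +
          Bw.mulVec ''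
            {w | ∀ i, vecBlock w i ⬝ᵥ (E_W i).mulVec (vecBlock w i) ≤ σ ^ 2} ⊆
        {x | x ⬝ᵥ X⁻¹.mulVec x ≤ σ ^ 2}) := by
  have hdet : IsUnit X.det := isUnit_iff_ne_zero.mpr hX.det_pos.ne'
  intro σ _
  refine ⟨fun x hx i => ?_, ?_⟩
  · rw [dotProduct_transpose_mul_self_mulVec, sub_mul_mul_nonsing_inv hdet]
    exact (mul_nonsing_inv_mulVec_dotProduct_self_le hdet (hb i) x).trans hx
  · rintro _ ⟨_, ⟨x, hx, rfl⟩, _, ⟨w, hw, rfl⟩, rfl⟩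
    have hD : w ⬝ᵥ blockDiagonal' (fun i => aσ i • E_W i) *ᵥ w ≤ (∑ i, aσ i) * σ ^ 2 := by
      rw [dotProduct_blockDiagonal'_mulVec, Finset.sum_mul]
      refine Finset.sum_le_sum fun i _ => ?_
      rw [smul_mulVec, dotProduct_smul, smul_eq_mul]
      exact mul_le_mul_of_nonneg_left (hw i) (haσ i)
    rw [sub_mul_mul_nonsing_inv hdet]
    calc _ ≤ aα * (x ⬝ᵥ X⁻¹ *ᵥ x) + w ⬝ᵥ blockDiagonal' (fun i => aσ i • E_W i) *ᵥ w :=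
          nonsing_inv_mulVec_dotProduct_le_of_posSemidef hdet ha x w
      _ ≤ aα * σ ^ 2 + (∑ i, aσ i) * σ ^ 2 := by gcongr; exact hx
      _ ≤ σ ^ 2 := by rw [← add_mul]; exact mul_le_of_le_one_left (sq_nonneg σ) hc

/-- the approximate minimal-RPI LMI conditions (a)–(c) in the variables
`(X, Y)` imply the RPI level-set properties with `E_R = X⁻¹`, `K = Y X⁻¹`. -/
theorem stmt8 {nx nu s : ℕ} {np nq : Fin s → ℕ}
    (A : Matrix (Fin nx) (Fin nx) ℝ) (Bu : Matrix (Fin nx) (Fin nu) ℝ)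
    (Bw : Matrix (Fin nx) (Σ i, Fin (np i)) ℝ)
    (X : Matrix (Fin nx) (Fin nx) ℝ) (hX : X.PosDef)
    (Y : Matrix (Fin nu) (Fin nx) ℝ)
    (E_W : ∀ i, Matrix (Fin (np i)) (Fin (np i)) ℝ) (hEW : ∀ i, (E_W i).PosDef)
    (EYx : ∀ i : Fin s, Matrix (Fin (nq i)) (Fin nx) ℝ)
    (EYu : ∀ i : Fin s, Matrix (Fin (nq i)) (Fin nu) ℝ)
    (aα : ℝ) (aσ : Fin s → ℝ) (haα : 0 ≤ aα) (haσ : ∀ i, 0 ≤ aσ i)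
    (ha : (-(Matrix.fromBlocks
        (Matrix.fromBlocks (-X) (A * X - Bu * Y) ((A * X - Bu * Y)ᵀ) (-(aα • X)))
        (Matrix.fromRows Bw 0)
        (Matrix.fromCols Bwᵀ 0)
        (-(Matrix.blockDiagonal' fun i => aσ i • E_W i)))).PosSemidef)
    (hb : ∀ i, (-(Matrix.fromBlocks
        (-(1 : Matrix (Fin (nq i)) (Fin (nq i)) ℝ)) (EYx i * X - EYu i * Y)
        ((EYx i * X - EYu i * Y)ᵀ) (-X))).PosSemidef)
    (hc : aα + ∑ i, aσ i ≤ 1) :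
    ∀ σ : ℝ, 0 ≤ σ →
      ({x | x ⬝ᵥ X⁻¹.mulVec x ≤ σ ^ 2} ⊆
          {x | ∀ i, x ⬝ᵥ ((EYx i - EYu i * (Y * X⁻¹))ᵀ *
              (EYx i - EYu i * (Y * X⁻¹))).mulVec x ≤ σ ^ 2}) ∧
      ((A - Bu * (Y * X⁻¹)).mulVec '' {x | x ⬝ᵥ X⁻¹.mulVec x ≤ σ ^ 2} +
          Bw.mulVec ''
            {w | ∀ i, vecBlock w i ⬝ᵥ (E_W i).mulVec (vecBlock w i) ≤ σ ^ 2} ⊆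
        {x | x ⬝ᵥ X⁻¹.mulVec x ≤ σ ^ 2}) :=
  stmt8_general A Bu Bw X hX Y E_W EYx EYu aα aσ haα haσ ha hb hc
end

section
/- Let K, K_R ∈ ℝ^{n_u×n_x}, E_R ∈ ℝ^{n_x×n_x} symmetric positive definite, E_N ∈ ℝ^{n_x×n_x} symmetric positive definite, and set Ā = A − B^u K, Ā_R = A − B^u K_R, C̄ = C_y − D_y^u K, C̄_R = C_y − D_y^u K_R, H̄ = H_x − H_u K, H̄_R = H_x − H_u K_R. Let a_α ≥ 0 and a_{σ,1},…,a_{σ,s} ≥ 0 be such that for all α, α' ≥ 0 and σ ∈ ℝ^s ≥ 0 with α'² ≥ a_α α² + Σ_i a_{σ,i} σ_i², one has Ā_R·R(α) + B^w·W(σ) ⊆ R(α'), where R(α) = {e : eᵀ E_R e ≤ α²} and W(σ) = {w = (w_1,…,w_s) : ‖w_i‖₂ ≤ σ_i for all i}. Suppose sequences (z_k)_{k=0}^N, (ν_k)_{k=0}^{N−1}, (α_k)_{k=0}^N ≥ 0, (σ_k)_{k=0}^{N−1} ∈ ℝ^s ≥ 0 satisfy: (1) z_{k+1} = Ā z_k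 + B^u ν_k; (2) α_{k+1}² ≥ a_α α_k² + Σ_i a_{σ,i}(σ_k)_i²; (3) for each i, (σ_k)_i ≥ ‖C̄_i z_k + (D_y^u)_i ν_k‖₂ + ‖(C̄_R)_i E_R^{-1/2}‖₂ α_k; (4) for each row j, H̄_j z_k + (H_u)_j ν_k + ‖(H̄_R)_j E_R^{-1/2}‖₂ α_k ≤ g_j; (5) ‖E_N^{1/2} z_N‖₂ + ‖E_N^{1/2} E_R^{-1/2}‖₂ α_N ≤ 1. Let x_0 = z_0 + e_0 with e_0ᵀ E_R e_0 ≤ α_0², and generate the true trajectory by x_{k+1} = A x_k + B^u u_k + B^w w_k with u_k = −K z_k + ν_k − K_R e_k, e_k = x_k − z_k, and w_k = Δ_k (C_y x_k + D_y^u u_k) for arbitrary Δ_k ∈ 𝔻. Then for every k < N, (x_k, u_k) satisfies H_x x_k + H_u u_k ≤ g, for every k ≤ N one has e_kᵀ E_R e_k ≤ α_k², and the terminal state satisfies x_Nᵀ E_N x_N ≤ 1. -/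
open Matrix Set Pointwise Filter Topology

/-!
The error `e = x - z` obeys `e⁺ = (A - B^u K_R) e + B^w w`. Writing `E_R = SᵀS`, every linear
image of the error factors as `M e = (M S⁻¹)(S e)` with `‖S e‖ ≤ α` on the tube `R(α)`, so
conditions (3)–(5) bound the worst case of the corresponding quantities over the tube. By
induction the error stays in `R(α_k)`: since `Δ_k` acts blockwise with gain at most one, (3)
puts `w_k` in `W(σ_k)`, and the RPI property together with (2) gives `e_{k+1} ∈ R(α_{k+1})`.
The constraint and terminal bounds then follow from (4) and (5) by the same estimate.
-/

section VNorm

open scoped Matrix.Norms.L2Operator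

variable {m n : Type*} [Fintype m] [Fintype n]

theorem vnorm_eq_norm_toLp (v : n → ℝ) : vnorm v = ‖WithLp.toLp 2 v‖ := by
  simp [vnorm, EuclideanSpace.norm_eq]

theorem vnorm_nonneg (v : n → ℝ) : 0 ≤ vnorm v := Real.sqrt_nonneg _

theorem vnorm_add_le (a b : n → ℝ) : vnorm (a + b) ≤ vnorm a + vnorm b := by
  simp only [vnorm_eq_norm_toLp, WithLp.toLp_add]
  exact norm_add_le _ _

theorem vnorm_sq (v : n → ℝ) : vnorm v ^ 2 = v ⬝ᵥ v := by
  rw [vnorm, Real.sq_sqrt (Finset.sum_nonneg fun _ _ => sq_nonneg _)]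
  simp [dotProduct, sq]

theorem dotProduct_le_vnorm_mul_vnorm (a b : n → ℝ) : a ⬝ᵥ b ≤ vnorm a * vnorm b := by
  simpa [vnorm_eq_norm_toLp, EuclideanSpace.inner_eq_star_dotProduct, dotProduct_comm]
    using real_inner_le_norm (WithLp.toLp 2 a) (WithLp.toLp 2 b)

theorem sNorm_eq_l2_opNorm [DecidableEq n] (M : Matrix m n ℝ) : sNorm M = ‖M‖ := by
  rw [Matrix.l2_opNorm_def, ← ContinuousLinearMap.sSup_unitClosedBall_eq_norm, sNorm]
  congr 1
  ext r
  simp only [Set.mem_image, Set.mem_ofPred_eq, Metric.mem_closedBall, dist_zero_right]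
  constructor
  · rintro ⟨v, hv, rfl⟩
    exact ⟨WithLp.toLp 2 v, by rwa [← vnorm_eq_norm_toLp], by simp [vnorm_eq_norm_toLp]⟩
  · rintro ⟨v, hv, rfl⟩
    exact ⟨v.ofLp, by rwa [vnorm_eq_norm_toLp],
      by simp [vnorm_eq_norm_toLp, Matrix.toLpLin_apply]⟩

theorem vnorm_mulVec_le (M : Matrix m n ℝ) (v : n → ℝ) :
    vnorm (M *ᵥ v) ≤ sNorm M * vnorm v := by
  classical
  simpa [vnorm_eq_norm_toLp, sNorm_eq_l2_opNorm] using M.l2_opNorm_mulVec (WithLp.toLp 2 v)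

theorem sNorm_nonneg (M : Matrix m n ℝ) : 0 ≤ sNorm M := by
  classical
  exact sNorm_eq_l2_opNorm M ▸ norm_nonneg M

end VNorm

section Ellipsoid

variable {m n : Type*} [Fintype n]

theorem dotProduct_mulVec_eq_vnorm_sq {S E : Matrix n n ℝ} (h : Sᵀ * S = E) (v : n → ℝ) :
    v ⬝ᵥ E *ᵥ v = vnorm (S *ᵥ v) ^ 2 := by
  rw [← h, ← Matrix.mulVec_mulVec, Matrix.dotProduct_mulVec, Matrix.vecMul_transpose, vnorm_sq]

theorem vnorm_le_of_dotProduct_mulVec_le {S E : Matrix n n ℝ} (h : Sᵀ * S = E)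
    {v : n → ℝ} {a : ℝ} (ha : 0 ≤ a) (hv : v ⬝ᵥ E *ᵥ v ≤ a ^ 2) : vnorm (S *ᵥ v) ≤ a := by
  rw [dotProduct_mulVec_eq_vnorm_sq h] at hv
  exact (pow_le_pow_iff_left₀ (vnorm_nonneg _) ha two_ne_zero).mp hv

variable [DecidableEq n] {S : Matrix n n ℝ}

theorem mulVec_eq_mul_inv_mulVec (M : Matrix m n ℝ) (hS : IsUnit S.det) (v : n → ℝ) :
    M *ᵥ v = (M * S⁻¹) *ᵥ (S *ᵥ v) := by
  rw [Matrix.mulVec_mulVec, Matrix.nonsing_inv_mul_cancel_right S M hS]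

theorem vnorm_mulVec_le_of_dotProduct_mulVec_le [Fintype m] {E : Matrix n n ℝ}
    (hSE : Sᵀ * S = E) (hS : IsUnit S.det) {a : ℝ} (ha : 0 ≤ a) {v : n → ℝ}
    (hv : v ⬝ᵥ E *ᵥ v ≤ a ^ 2) (M : Matrix m n ℝ) :
    vnorm (M *ᵥ v) ≤ sNorm (M * S⁻¹) * a := by
  rw [mulVec_eq_mul_inv_mulVec M hS v]
  exact (vnorm_mulVec_le _ _).trans
    (mul_le_mul_of_nonneg_left (vnorm_le_of_dotProduct_mulVec_le hSE ha hv) (sNorm_nonneg _))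

theorem mulVec_apply_le_of_dotProduct_mulVec_le {E : Matrix n n ℝ} (hSE : Sᵀ * S = E)
    (hS : IsUnit S.det) {a : ℝ} (ha : 0 ≤ a) {v : n → ℝ} (hv : v ⬝ᵥ E *ᵥ v ≤ a ^ 2)
    (M : Matrix m n ℝ) (j : m) :
    (M *ᵥ v) j ≤ vnorm ((M * S⁻¹) j) * a := by
  rw [mulVec_eq_mul_inv_mulVec M hS v]
  exact (dotProduct_le_vnorm_mul_vnorm _ _).trans
    (mul_le_mul_of_nonneg_left (vnorm_le_of_dotProduct_mulVec_le hSE ha hv) (vnorm_nonneg _))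

end Ellipsoid

theorem vecBlock_blockDiagonal'_mulVec {s : ℕ} {np nq : Fin s → ℕ}
    (B : ∀ i, Matrix (Fin (np i)) (Fin (nq i)) ℝ) (v : (Σ i, Fin (nq i)) → ℝ) (i : Fin s) :
    vecBlock (Matrix.blockDiagonal' B *ᵥ v) i = B i *ᵥ vecBlock v i := by
  funext j
  simp only [vecBlock, Matrix.mulVec, dotProduct, ← Finset.univ_sigma_univ, Finset.sum_sigma,
    Matrix.blockDiagonal'_apply]
  rw [Finset.sum_eq_single i (fun b _ hb => by simp [Ne.symm hb]) (by simp)]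
  simp

theorem vecBlock_add {s : ℕ} {np : Fin s → ℕ} (v v' : (Σ i, Fin (np i)) → ℝ) (i : Fin s) :
    vecBlock (v + v') i = vecBlock v i + vecBlock v' i := rfl

theorem vecBlock_mulVec {s : ℕ} {nq : Fin s → ℕ} {n : Type*} [Fintype n]
    (M : Matrix (Σ i, Fin (nq i)) n ℝ) (v : n → ℝ) (i : Fin s) :
    vecBlock (M *ᵥ v) i = rowBlock M i *ᵥ v := rfl

theorem vnorm_vecBlock_mulVec_add_le {s : ℕ} {np nq : Fin s → ℕ} {n : Type*} [Fintype n]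
    [DecidableEq n] {Δ : Matrix (Σ i, Fin (np i)) (Σ i, Fin (nq i)) ℝ} (hΔ : memD Δ)
    (M : Matrix (Σ i, Fin (nq i)) n ℝ) {S E : Matrix n n ℝ} (hSE : Sᵀ * S = E)
    (hS : IsUnit S.det) {a : ℝ} (ha : 0 ≤ a) {v : n → ℝ} (hv : v ⬝ᵥ E *ᵥ v ≤ a ^ 2)
    (q : (Σ i, Fin (nq i)) → ℝ) (i : Fin s) :
    vnorm (vecBlock (Δ *ᵥ (q + M *ᵥ v)) i) ≤
      vnorm (vecBlock q i) + sNorm (rowBlock M i * S⁻¹) * a := by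
  obtain ⟨B, hB, rfl⟩ := hΔ
  rw [vecBlock_blockDiagonal'_mulVec]
  refine (hB i _).trans ?_
  rw [vecBlock_add, vecBlock_mulVec]
  exact (vnorm_add_le _ _).trans
    (add_le_add_right (vnorm_mulVec_le_of_dotProduct_mulVec_le hSE hS ha hv _) _)

theorem mulVec_add_mulVec_feedback {p nx nu : Type*} [Fintype nx] [Fintype nu]
    (C : Matrix p nx ℝ) (D : Matrix p nu ℝ) (K K_R : Matrix nu nx ℝ) (z e : nx → ℝ)
    (ν : nu → ℝ) :
    C *ᵥ (z + e) + D *ᵥ (-(K *ᵥ z) + ν - K_R *ᵥ e) =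
      (C - D * K) *ᵥ z + D *ᵥ ν + (C - D * K_R) *ᵥ e := by
  simp only [Matrix.sub_mulVec, Matrix.mulVec_add, Matrix.mulVec_sub, Matrix.mulVec_neg,
    ← Matrix.mulVec_mulVec]
  abel

theorem stmt15_general {nx nu nc s : ℕ} {np nq : Fin s → ℕ}
    (A : Matrix (Fin nx) (Fin nx) ℝ) (Bu : Matrix (Fin nx) (Fin nu) ℝ)
    (Bw : Matrix (Fin nx) (Σ i, Fin (np i)) ℝ)
    (Cy : Matrix (Σ i, Fin (nq i)) (Fin nx) ℝ)
    (Dyu : Matrix (Σ i, Fin (nq i)) (Fin nu) ℝ)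
    (Hx : Matrix (Fin nc) (Fin nx) ℝ) (Hu : Matrix (Fin nc) (Fin nu) ℝ) (g : Fin nc → ℝ)
    (K K_R : Matrix (Fin nu) (Fin nx) ℝ)
    (E_R : Matrix (Fin nx) (Fin nx) ℝ)
    (S : Matrix (Fin nx) (Fin nx) ℝ) (hS : S.PosDef) (hSS : S * S = E_R)
    (E_N : Matrix (Fin nx) (Fin nx) ℝ)
    (SN : Matrix (Fin nx) (Fin nx) ℝ) (hSN : SN.PosDef) (hSNSN : SN * SN = E_N)
    (aα : ℝ) (aσ : Fin s → ℝ)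
    -- the RPI level-set property of the family `R(α)`, `W(σ)`
    (hRPI : ∀ (a : ℝ) (σ' : Fin s → ℝ) (a' : ℝ), 0 ≤ a → (∀ i, 0 ≤ σ' i) → 0 ≤ a' →
      aα * a ^ 2 + ∑ i, aσ i * σ' i ^ 2 ≤ a' ^ 2 →
      (A - Bu * K_R).mulVec '' {e | e ⬝ᵥ E_R.mulVec e ≤ a ^ 2} +
          Bw.mulVec '' {w | ∀ i, vnorm (vecBlock w i) ≤ σ' i} ⊆
        {e | e ⬝ᵥ E_R.mulVec e ≤ a' ^ 2})
    (N : ℕ)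
    (z : ℕ → Fin nx → ℝ) (ν : ℕ → Fin nu → ℝ) (α : ℕ → ℝ) (σ : ℕ → Fin s → ℝ)
    (hαnn : ∀ k, 0 ≤ α k) (hσnn : ∀ k i, 0 ≤ σ k i)
    -- (1) nominal dynamics
    (h1 : ∀ k < N, z (k + 1) = (A - Bu * K).mulVec (z k) + Bu.mulVec (ν k))
    -- (2) tube-scaling dynamics
    (h2 : ∀ k < N, aα * α k ^ 2 + ∑ i, aσ i * σ k i ^ 2 ≤ α (k + 1) ^ 2)
    -- (3) uncertainty-channel bounds
    (h3 : ∀ k < N, ∀ i,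
      vnorm (vecBlock ((Cy - Dyu * K).mulVec (z k) + Dyu.mulVec (ν k)) i) +
        sNorm (rowBlock (Cy - Dyu * K_R) i * S⁻¹) * α k ≤ σ k i)
    -- (4) tightened state/input constraints
    (h4 : ∀ k < N, ∀ j,
      ((Hx - Hu * K).mulVec (z k)) j + (Hu.mulVec (ν k)) j +
        vnorm (((Hx - Hu * K_R) * S⁻¹) j) * α k ≤ g j)
    -- (5) terminal condition
    (h5 : vnorm (SN.mulVec (z N)) + sNorm (SN * S⁻¹) * α N ≤ 1)
    -- the true uncertain trajectory
    (x : ℕ → Fin nx → ℝ) (e : ℕ → Fin nx → ℝ) (u : ℕ → Fin nu → ℝ)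
    (w : ℕ → (Σ i, Fin (np i)) → ℝ)
    (Δseq : ℕ → Matrix (Σ i, Fin (np i)) (Σ i, Fin (nq i)) ℝ)
    (hΔ : ∀ k, memD (Δseq k))
    (he : ∀ k, e k = x k - z k)
    (hu : ∀ k, u k = -(K.mulVec (z k)) + ν k - K_R.mulVec (e k))
    (hw : ∀ k, w k = (Δseq k).mulVec (Cy.mulVec (x k) + Dyu.mulVec (u k)))
    (he0 : e 0 ⬝ᵥ E_R.mulVec (e 0) ≤ α 0 ^ 2)
    (hdyn : ∀ k < N, x (k + 1) =
      A.mulVec (x k) + Bu.mulVec (u k) + Bw.mulVec (w k)) :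
    (∀ k < N, ∀ j, (Hx.mulVec (x k)) j + (Hu.mulVec (u k)) j ≤ g j) ∧
    (∀ k ≤ N, e k ⬝ᵥ E_R.mulVec (e k) ≤ α k ^ 2) ∧
    x N ⬝ᵥ E_N.mulVec (x N) ≤ 1 := by
  have hSt : Sᵀ * S = E_R := by rw [(isHermitian_iff_isSymm.mp hS.isHermitian).eq, hSS]
  have hSNt : SNᵀ * SN = E_N := by rw [(isHermitian_iff_isSymm.mp hSN.isHermitian).eq, hSNSN]
  have hSu : IsUnit S.det := hS.det_pos.ne'.isUnit
  have hx : ∀ k, x k = z k + e k := fun k => by rw [he k, add_sub_cancel]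
  have hout : ∀ k {p : Type} (C : Matrix p (Fin nx) ℝ) (D : Matrix p (Fin nu) ℝ),
      C *ᵥ x k + D *ᵥ u k = (C - D * K) *ᵥ z k + D *ᵥ ν k + (C - D * K_R) *ᵥ e k :=
    fun k _ C D => by rw [hx k, hu k, mulVec_add_mulVec_feedback]
  have tube : ∀ k ≤ N, e k ⬝ᵥ E_R *ᵥ e k ≤ α k ^ 2 := by
    intro k
    induction k with
    | zero => exact fun _ => he0
    | succ k ih =>
      intro hk
      have hek := ih (by omega)
      have hwk : ∀ i, vnorm (vecBlock (w k) i) ≤ σ k i := fun i => by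
        rw [hw k, hout k]
        exact (vnorm_vecBlock_mulVec_add_le (hΔ k) _ hSt hSu (hαnn k) hek _ i).trans (h3 k hk i)
      have herr : e (k + 1) = (A - Bu * K_R) *ᵥ e k + Bw *ᵥ w k := by
        rw [he, hdyn k hk, hout k, h1 k hk]
        abel
      exact hRPI _ _ _ (hαnn k) (hσnn k) (hαnn _) (h2 k hk)
        (herr ▸ Set.add_mem_add ⟨_, hek, rfl⟩ ⟨_, hwk, rfl⟩)
  refine ⟨fun k hk j => ?_, tube, ?_⟩
  · have hHe := mulVec_apply_le_of_dotProduct_mulVec_le hSt hSu (hαnn k) (tube k hk.le)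
      (Hx - Hu * K_R) j
    have hHxu := congrFun (hout k Hx Hu) j
    simp only [Pi.add_apply] at hHxu
    linarith [h4 k hk j]
  · have hSNe := vnorm_mulVec_le_of_dotProduct_mulVec_le hSt hSu (hαnn N) (tube N le_rfl) SN
    rw [dotProduct_mulVec_eq_vnorm_sq hSNt, hx, Matrix.mulVec_add]
    exact pow_le_one₀ (vnorm_nonneg _) ((vnorm_add_le _ _).trans (by linarith))

/-- the T-GCMPC feasibility theorem: a feasible solution of the SOCP
tube optimization keeps the true uncertain trajectory feasible, keeps the error in the
tube, and steers the terminal state into the terminal ellipsoid. `S` and `SN` are the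
symmetric positive definite square roots of `E_R` and `E_N` respectively. -/
theorem stmt15 {nx nu nc s : ℕ} {np nq : Fin s → ℕ}
    (A : Matrix (Fin nx) (Fin nx) ℝ) (Bu : Matrix (Fin nx) (Fin nu) ℝ)
    (Bw : Matrix (Fin nx) (Σ i, Fin (np i)) ℝ)
    (Cy : Matrix (Σ i, Fin (nq i)) (Fin nx) ℝ)
    (Dyu : Matrix (Σ i, Fin (nq i)) (Fin nu) ℝ)
    (Hx : Matrix (Fin nc) (Fin nx) ℝ) (Hu : Matrix (Fin nc) (Fin nu) ℝ) (g : Fin nc → ℝ)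
    (K K_R : Matrix (Fin nu) (Fin nx) ℝ)
    (E_R : Matrix (Fin nx) (Fin nx) ℝ) (hER : E_R.PosDef)
    (S : Matrix (Fin nx) (Fin nx) ℝ) (hS : S.PosDef) (hSS : S * S = E_R)
    (E_N : Matrix (Fin nx) (Fin nx) ℝ) (hEN : E_N.PosDef)
    (SN : Matrix (Fin nx) (Fin nx) ℝ) (hSN : SN.PosDef) (hSNSN : SN * SN = E_N)
    (aα : ℝ) (aσ : Fin s → ℝ) (haα : 0 ≤ aα) (haσ : ∀ i, 0 ≤ aσ i)
    -- the RPI level-set property of the family `R(α)`, `W(σ)`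
    (hRPI : ∀ (a : ℝ) (σ' : Fin s → ℝ) (a' : ℝ), 0 ≤ a → (∀ i, 0 ≤ σ' i) → 0 ≤ a' →
      aα * a ^ 2 + ∑ i, aσ i * σ' i ^ 2 ≤ a' ^ 2 →
      (A - Bu * K_R).mulVec '' {e | e ⬝ᵥ E_R.mulVec e ≤ a ^ 2} +
          Bw.mulVec '' {w | ∀ i, vnorm (vecBlock w i) ≤ σ' i} ⊆
        {e | e ⬝ᵥ E_R.mulVec e ≤ a' ^ 2})
    (N : ℕ)
    (z : ℕ → Fin nx → ℝ) (ν : ℕ → Fin nu → ℝ) (α : ℕ → ℝ) (σ : ℕ → Fin s → ℝ)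
    (hαnn : ∀ k, 0 ≤ α k) (hσnn : ∀ k i, 0 ≤ σ k i)
    -- (1) nominal dynamics
    (h1 : ∀ k < N, z (k + 1) = (A - Bu * K).mulVec (z k) + Bu.mulVec (ν k))
    -- (2) tube-scaling dynamics
    (h2 : ∀ k < N, aα * α k ^ 2 + ∑ i, aσ i * σ k i ^ 2 ≤ α (k + 1) ^ 2)
    -- (3) uncertainty-channel bounds
    (h3 : ∀ k < N, ∀ i,
      vnorm (vecBlock ((Cy - Dyu * K).mulVec (z k) + Dyu.mulVec (ν k)) i) +
        sNorm (rowBlock (Cy - Dyu * K_R) i * S⁻¹) * α k ≤ σ k i)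
    -- (4) tightened state/input constraints
    (h4 : ∀ k < N, ∀ j,
      ((Hx - Hu * K).mulVec (z k)) j + (Hu.mulVec (ν k)) j +
        vnorm (((Hx - Hu * K_R) * S⁻¹) j) * α k ≤ g j)
    -- (5) terminal condition
    (h5 : vnorm (SN.mulVec (z N)) + sNorm (SN * S⁻¹) * α N ≤ 1)
    -- the true uncertain trajectory
    (x : ℕ → Fin nx → ℝ) (e : ℕ → Fin nx → ℝ) (u : ℕ → Fin nu → ℝ)
    (w : ℕ → (Σ i, Fin (np i)) → ℝ)
    (Δseq : ℕ → Matrix (Σ i, Fin (np i)) (Σ i, Fin (nq i)) ℝ)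
    (hΔ : ∀ k, memD (Δseq k))
    (he : ∀ k, e k = x k - z k)
    (hu : ∀ k, u k = -(K.mulVec (z k)) + ν k - K_R.mulVec (e k))
    (hw : ∀ k, w k = (Δseq k).mulVec (Cy.mulVec (x k) + Dyu.mulVec (u k)))
    (he0 : e 0 ⬝ᵥ E_R.mulVec (e 0) ≤ α 0 ^ 2)
    (hdyn : ∀ k < N, x (k + 1) =
      A.mulVec (x k) + Bu.mulVec (u k) + Bw.mulVec (w k)) :
    (∀ k < N, ∀ j, (Hx.mulVec (x k)) j + (Hu.mulVec (u k)) j ≤ g j) ∧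
    (∀ k ≤ N, e k ⬝ᵥ E_R.mulVec (e k) ≤ α k ^ 2) ∧
    x N ⬝ᵥ E_N.mulVec (x N) ≤ 1 :=
  stmt15_general A Bu Bw Cy Dyu Hx Hu g K K_R E_R S hS hSS E_N SN hSN hSNSN aα aσ hRPI N z ν α σ
    hαnn hσnn h1 h2 h3 h4 h5 x e u w Δseq hΔ he hu hw he0 hdyn
end
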